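/- An ω-regular language L ⊆ Σ^ω is not DCW-recognizable if and only if there exist finite words x ∈ Σ* and x₁, x₂ ∈ Σ⁺ such that x·(x₁+x₂)*·x₁^ω ∩ L = ∅ and x·(x₁*·x₂)^ω ⊆ L. -/

import Mathlib

structure DetAuto (α : Type) where
  Q : Type
  [fin : Fintype Q]
  init : Q
  δ : Q → α → Q

attribute [instance] DetAuto.fin

/-- The run of a deterministic automaton on an infinite word. -/
def DetAuto.run {α : Type} (M : DetAuto α) (x : ℕ → α) : ℕ → M.Q
  | 0 => M.init
  | n + 1 => M.δ (M.run x n) (x n)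

/-- Parity acceptance: the maximal color occurring infinitely often in the run is odd. -/
def ParityAccept {α : Type} (M : DetAuto α) (c : M.Q → ℕ) (x : ℕ → α) : Prop :=
  ∃ m, Odd m ∧ (∃ᶠ n in Filter.atTop, c (M.run x n) = m) ∧
    ∀ m', (∃ᶠ n in Filter.atTop, c (M.run x n) = m') → m' ≤ m

/-- A language is ω-regular iff it is recognized by some deterministic parity automaton. -/
def OmegaRegular {α : Type} (L : Set (ℕ → α)) : Prop :=
  ∃ (M : DetAuto α) (c : M.Q → ℕ), ∀ x, x ∈ L ↔ ParityAccept M c x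

/-- `u` is a prefix of the infinite word `w`. -/
def HasPrefixWord {α : Type} (w : ℕ → α) (u : List α) : Prop :=
  ∀ i : Fin u.length, w i.1 = u.get i

/-- The ω-language `x·(x₁+x₂)*·x₁^ω`. -/
def LangA {α : Type} (x x₁ x₂ : List α) : Set (ℕ → α) :=
  { w | ∃ ws : List (List α), (∀ u ∈ ws, u = x₁ ∨ u = x₂) ∧
        ∀ n, HasPrefixWord w (x ++ ws.flatten ++ (List.replicate n x₁).flatten) }

/-- The ω-language `x·(x₁*·x₂)^ω`. -/
def LangB {α : Type} (x x₁ x₂ : List α) : Set (ℕ → α) :=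
  { w | ∃ j : ℕ → ℕ, ∀ n, HasPrefixWord w
        (x ++ ((List.range n).map (fun i => (List.replicate (j i) x₁).flatten ++ x₂)).flatten) }

/-- A language is DCW-recognizable iff some deterministic co-Büchi automaton recognizes it. -/
def DCWRecognizable {α : Type} (L : Set (ℕ → α)) : Prop :=
  ∃ (M : DetAuto α) (acc : Set M.Q),
    ∀ x, x ∈ L ↔ ¬ ∃ᶠ n in Filter.atTop, M.run x n ∈ acc

/-! Fix a parity automaton `(M, c)` for `L`. The decisive configuration is a reachable state `q`
with a loop `v₁` of even maximal color and a loop `v₂` of larger odd maximal color: then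
`u·(v₁+v₂)*·v₁^ω` is rejected and `u·(v₁*·v₂)^ω` accepted. Without it, the co-Büchi condition
"visit states carrying no odd-maximal loop only finitely often" recognizes `L`: an accepting run
eventually stays on states lying on a loop of its odd top recurring color `m`; on a rejecting run,
a state of the even top recurring color `m` that is visited infinitely often lies on a loop of
maximal color `m`, and an odd-maximal loop there would have maximal color above `m`, so it has
none.

Conversely, if `x·(x₁+x₂)*·x₁^ω` avoids `L` and `x·(x₁*·x₂)^ω ⊆ L`, a co-Büchi automaton for `L`
would visit its rejecting set on every `p·x₁^ω` with `p ∈ x·(x₁+x₂)*`, hence inside some finite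
`p·x₁^k`; appending `x₁^k·x₂` block after block yields a word of `x·(x₁*·x₂)^ω` that visits the
rejecting set infinitely often. -/

open Filter

variable {α : Type}

lemma exists_frequently_eq_and_eventually_le {g : ℕ → ℕ} {B : ℕ} (hB : ∀ n, g n ≤ B) :
    ∃ m, (∃ᶠ n in atTop, g n = m) ∧ ∀ᶠ n in atTop, g n ≤ m := by
  classical
  have hex : ∃ m, ∀ᶠ n in atTop, g n ≤ m := ⟨B, .of_forall hB⟩
  refine ⟨Nat.find hex, fun hne => ?_, Nat.find_spec hex⟩
  have hpred : ∀ᶠ n in atTop, g n ≤ Nat.find hex - 1 :=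
    ((Nat.find_spec hex).and hne).mono fun n h => by omega
  have hzero := Nat.find_min' hex hpred
  obtain ⟨n, hle, hne⟩ := ((Nat.find_spec hex).and hne).exists
  omega

lemma eventually_frequently_eq_self {β : Type*} [Finite β] (f : ℕ → β) :
    ∀ᶠ n in atTop, ∃ᶠ k in atTop, f k = f n := by
  have : ∀ᶠ n in atTop, ∀ b, (∃ᶠ k in atTop, f k = b) ∨ f n ≠ b :=
    eventually_all.2 fun b => by
      by_cases hb : ∃ᶠ k in atTop, f k = b
      · exact .of_forall fun _ => .inl hb
      · exact (not_frequently.1 hb).mono fun _ h => .inr h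
  exact this.mono fun n h => (h (f n)).resolve_right (not_not.2 rfl)

def wordSegment (w : ℕ → α) : ℕ → ℕ → List α
  | _, 0 => []
  | a, k + 1 => w a :: wordSegment w (a + 1) k

def blockPrefix (u : List α) (b : ℕ → List α) (n : ℕ) : List α :=
  u ++ ((List.range n).map b).flatten

section blockPrefix

variable {u : List α} {b : ℕ → List α}

@[simp] lemma blockPrefix_zero : blockPrefix u b 0 = u := by
  simp [blockPrefix]

lemma blockPrefix_succ (n : ℕ) : blockPrefix u b (n + 1) = blockPrefix u b n ++ b n := by
  simp [blockPrefix, List.range_succ]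

lemma blockPrefix_const (v : List α) (n : ℕ) :
    blockPrefix u (fun _ => v) n = u ++ (List.replicate n v).flatten := by
  simp [blockPrefix, List.map_const']

lemma blockPrefix_isPrefix {m n : ℕ} (h : m ≤ n) : blockPrefix u b m <+: blockPrefix u b n := by
  obtain ⟨k, rfl⟩ := Nat.exists_eq_add_of_le h
  exact ⟨((List.range k).map fun i => b (m + i)).flatten,
    by simp [blockPrefix, List.range_add, Function.comp_def]⟩

lemma le_length_blockPrefix (hb : ∀ n, b n ≠ []) (n : ℕ) : n ≤ (blockPrefix u b n).length := by
  refine StrictMono.le_apply (f := fun n => (blockPrefix u b n).length) ?_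
  refine strictMono_nat_of_lt_succ fun n => ?_
  simpa [blockPrefix_succ] using List.length_pos_iff.2 (hb n)

lemma exists_eq_length_blockPrefix_add (hb : ∀ n, b n ≠ []) {p : ℕ} (hp : u.length ≤ p) :
    ∃ n t, t < (b n).length ∧ p = (blockPrefix u b n).length + t := by
  induction p, hp using Nat.le_induction with
  | base => exact ⟨0, 0, List.length_pos_iff.2 (hb 0), by simp⟩
  | succ p _ ih =>
    obtain ⟨n, t, ht, rfl⟩ := ih
    by_cases hlast : t + 1 < (b n).length
    · exact ⟨n, t + 1, hlast, by omega⟩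
    · refine ⟨n + 1, 0, List.length_pos_iff.2 (hb (n + 1)), ?_⟩
      simp only [blockPrefix_succ, List.length_append]
      omega

lemma exists_hasPrefixWord_blockPrefix (hb : ∀ n, b n ≠ []) :
    ∃ w : ℕ → α, ∀ n, HasPrefixWord w (blockPrefix u b n) := by
  obtain ⟨d, -⟩ := List.exists_mem_of_ne_nil _ (hb 0)
  refine ⟨fun i => (blockPrefix u b (i + 1)).getD i d, fun n ⟨i, hi⟩ => ?_⟩
  have hi' : i < (blockPrefix u b (i + 1)).length := le_length_blockPrefix hb (i + 1)
  simp only [List.getD_eq_getElem _ _ hi', List.get_eq_getElem]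
  rw [(blockPrefix_isPrefix (le_max_left n (i + 1))).getElem hi,
    (blockPrefix_isPrefix (le_max_right n (i + 1))).getElem hi']

end blockPrefix

namespace DetAuto

variable (M : DetAuto α)

def evalFrom (q : M.Q) (u : List α) : M.Q :=
  u.foldl M.δ q

@[simp] lemma evalFrom_nil (q : M.Q) : M.evalFrom q [] = q := rfl

@[simp] lemma evalFrom_cons (q : M.Q) (a : α) (u : List α) :
    M.evalFrom q (a :: u) = M.evalFrom (M.δ q a) u := rfl

@[simp] lemma evalFrom_append (q : M.Q) (u v : List α) :
    M.evalFrom q (u ++ v) = M.evalFrom (M.evalFrom q u) v :=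
  List.foldl_append

lemma evalFrom_flatten_of_loops {q : M.Q} {ws : List (List α)}
    (h : ∀ u ∈ ws, M.evalFrom q u = q) : M.evalFrom q ws.flatten = q := by
  induction ws with
  | nil => rfl
  | cons u ws ih =>
    rw [List.flatten_cons, evalFrom_append, h u List.mem_cons_self,
      ih fun v hv => h v (List.mem_cons_of_mem u hv)]

lemma evalFrom_wordSegment (w : ℕ → α) (a k : ℕ) :
    M.evalFrom (M.run w a) (wordSegment w a k) = M.run w (a + k) := by
  induction k generalizing a with
  | zero => rfl
  | succ k ih => exact (ih (a + 1)).trans (by rw [Nat.add_right_comm, Nat.add_assoc])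

lemma run_eq_evalFrom_take {w : ℕ → α} {u : List α} (hw : HasPrefixWord w u) {n : ℕ}
    (hn : n ≤ u.length) : M.run w n = M.evalFrom M.init (u.take n) := by
  induction n with
  | zero => rfl
  | succ n ih =>
    have hlt : n < u.length := hn
    have hwn : w n = u[n] := hw ⟨n, hlt⟩
    rw [← List.take_concat_get' u n hlt, evalFrom_append, ← ih hlt.le, ← hwn]
    rfl

/-- The largest color among the states visited while reading `u` from `q`, the state reached
at the end excluded; `0` for `u = []`. -/
def maxColor (c : M.Q → ℕ) : M.Q → List α → ℕ
  | _, [] => 0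
  | q, a :: u => max (c q) (maxColor c (M.δ q a) u)

variable {M} (c : M.Q → ℕ)

@[simp] lemma maxColor_nil (q : M.Q) : M.maxColor c q [] = 0 := rfl

@[simp] lemma maxColor_cons (q : M.Q) (a : α) (u : List α) :
    M.maxColor c q (a :: u) = max (c q) (M.maxColor c (M.δ q a) u) := rfl

lemma maxColor_append (q : M.Q) (u v : List α) :
    M.maxColor c q (u ++ v) = max (M.maxColor c q u) (M.maxColor c (M.evalFrom q u) v) := by
  induction u generalizing q with
  | nil => simp
  | cons a u ih => simp [ih, max_assoc]

lemma le_maxColor_take {q : M.Q} {u : List α} {t : ℕ} (ht : t < u.length) :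
    c (M.evalFrom q (u.take t)) ≤ M.maxColor c q u := by
  induction u generalizing q t with
  | nil => simp at ht
  | cons a u ih =>
    cases t with
    | zero => exact le_max_left _ _
    | succ t =>
      rw [List.take_succ_cons, evalFrom_cons, maxColor_cons]
      exact (ih (Nat.lt_of_succ_lt_succ ht)).trans (le_max_right _ _)

lemma color_le_maxColor {q : M.Q} {u : List α} (hu : u ≠ []) : c q ≤ M.maxColor c q u :=
  le_maxColor_take c (t := 0) (List.length_pos_iff.2 hu)

lemma exists_take_eq_maxColor {q : M.Q} {u : List α} (hu : u ≠ []) :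
    ∃ t < u.length, c (M.evalFrom q (u.take t)) = M.maxColor c q u := by
  induction u generalizing q with
  | nil => exact absurd rfl hu
  | cons a u ih =>
    by_cases hu' : u = []
    · exact ⟨0, by simp, by simp [hu']⟩
    obtain ⟨t, ht, heq⟩ := ih (q := M.δ q a) hu'
    rcases le_total (c q) (M.maxColor c (M.δ q a) u) with hle | hle
    · exact ⟨t + 1, by simpa using ht, by simp [heq, hle]⟩
    · exact ⟨0, by simp, by simp [hle]⟩

lemma maxColor_flatten_le {q : M.Q} {ws : List (List α)} {m : ℕ}
    (hloop : ∀ u ∈ ws, M.evalFrom q u = q) (hle : ∀ u ∈ ws, M.maxColor c q u ≤ m) :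
    M.maxColor c q ws.flatten ≤ m := by
  induction ws with
  | nil => exact Nat.zero_le m
  | cons u ws ih =>
    rw [List.flatten_cons, maxColor_append, hloop u List.mem_cons_self]
    exact max_le (hle u List.mem_cons_self)
      (ih (fun v hv => hloop v (List.mem_cons_of_mem u hv))
        fun v hv => hle v (List.mem_cons_of_mem u hv))

lemma le_maxColor_wordSegment (w : ℕ → α) {a k i : ℕ} (hi : i < k) :
    c (M.run w (a + i)) ≤ M.maxColor c (M.run w a) (wordSegment w a k) := by
  induction k generalizing a i with
  | zero => omega
  | succ k ih =>
    cases i with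
    | zero => exact le_max_left _ _
    | succ i =>
      have := ih (a := a + 1) (Nat.lt_of_succ_lt_succ hi)
      rw [Nat.add_right_comm, Nat.add_assoc] at this
      exact this.trans (le_max_right (c (M.run w a)) _)

lemma maxColor_wordSegment_le (w : ℕ → α) {a k m : ℕ} (hle : ∀ i < k, c (M.run w (a + i)) ≤ m) :
    M.maxColor c (M.run w a) (wordSegment w a k) ≤ m := by
  induction k generalizing a with
  | zero => exact Nat.zero_le m
  | succ k ih =>
    refine max_le (hle 0 k.succ_pos) (ih (a := a + 1) fun i hi => ?_)
    simpa [Nat.add_right_comm, Nat.add_assoc] using hle (i + 1) (by omega)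

def IsMaxInfColor (M : DetAuto α) (c : M.Q → ℕ) (w : ℕ → α) (m : ℕ) : Prop :=
  (∃ᶠ n in atTop, c (M.run w n) = m) ∧ ∀ᶠ n in atTop, c (M.run w n) ≤ m

lemma exists_isMaxInfColor (w : ℕ → α) : ∃ m, M.IsMaxInfColor c w m :=
  exists_frequently_eq_and_eventually_le fun n =>
    Finset.le_sup (f := c) (Finset.mem_univ (M.run w n))

variable {c} {w : ℕ → α} {m : ℕ}

lemma IsMaxInfColor.parityAccept_iff (h : M.IsMaxInfColor c w m) :
    ParityAccept M c w ↔ Odd m := by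
  constructor
  · rintro ⟨m', hodd, hfreq, hmax⟩
    obtain ⟨n, hn, hle⟩ := (hfreq.and_eventually h.2).exists
    rwa [le_antisymm (hmax m h.1) (hn ▸ hle)]
  · refine fun hodd => ⟨m, hodd, h.1, fun m' hm' => ?_⟩
    obtain ⟨n, hn, hle⟩ := (hm'.and_eventually h.2).exists
    exact hn ▸ hle

section blocks

variable {u : List α} {b : ℕ → List α} {q : M.Q}

lemma evalFrom_blockPrefix (hq : M.evalFrom M.init u = q) (hloop : ∀ n, M.evalFrom q (b n) = q)
    (n : ℕ) : M.evalFrom M.init (blockPrefix u b n) = q := by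
  induction n with
  | zero => simpa using hq
  | succ n ih => rw [blockPrefix_succ, evalFrom_append, ih, hloop]

lemma run_length_blockPrefix_add (hw : ∀ n, HasPrefixWord w (blockPrefix u b n))
    (hq : M.evalFrom M.init u = q) (hloop : ∀ n, M.evalFrom q (b n) = q) {n t : ℕ}
    (ht : t ≤ (b n).length) :
    M.run w ((blockPrefix u b n).length + t) = M.evalFrom q ((b n).take t) := by
  have hlen : (blockPrefix u b n).length + t ≤ (blockPrefix u b (n + 1)).length := by
    simpa [blockPrefix_succ] using ht
  rw [M.run_eq_evalFrom_take (hw (n + 1)) hlen, blockPrefix_succ, List.take_append,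
    List.take_of_length_le (by omega), Nat.add_sub_cancel_left, evalFrom_append,
    evalFrom_blockPrefix hq hloop]

lemma isMaxInfColor_of_blocks (hw : ∀ n, HasPrefixWord w (blockPrefix u b n))
    (hq : M.evalFrom M.init u = q) (hloop : ∀ n, M.evalFrom q (b n) = q) (hb : ∀ n, b n ≠ [])
    (hmax : ∀ n, M.maxColor c q (b n) = m) : M.IsMaxInfColor c w m := by
  constructor
  · refine frequently_atTop.2 fun N => ?_
    obtain ⟨t, ht, heq⟩ := exists_take_eq_maxColor c (q := q) (hb N)
    refine ⟨(blockPrefix u b N).length + t,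
      (le_length_blockPrefix hb N).trans (Nat.le_add_right _ t), ?_⟩
    rw [run_length_blockPrefix_add hw hq hloop ht.le, heq, hmax]
  · refine eventually_atTop.2 ⟨u.length, fun p hp => ?_⟩
    obtain ⟨n, t, ht, rfl⟩ := exists_eq_length_blockPrefix_add hb hp
    rw [run_length_blockPrefix_add hw hq hloop ht.le, ← hmax n]
    exact le_maxColor_take c ht

end blocks

section languages

variable {x x₁ x₂ : List α} {q : M.Q}

lemma not_parityAccept_of_mem_langA (hq : M.evalFrom M.init x = q) (h₁ : M.evalFrom q x₁ = q)
    (h₂ : M.evalFrom q x₂ = q) (hx₁ : x₁ ≠ []) (heven : Even (M.maxColor c q x₁))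
    (hw : w ∈ LangA x x₁ x₂) : ¬ ParityAccept M c w := by
  obtain ⟨ws, hws, hpre⟩ := hw
  have hu : M.evalFrom M.init (x ++ ws.flatten) = q := by
    rw [evalFrom_append, hq, M.evalFrom_flatten_of_loops fun u hu => ?_]
    rcases hws u hu with rfl | rfl <;> assumption
  have hmax : M.IsMaxInfColor c w (M.maxColor c q x₁) :=
    isMaxInfColor_of_blocks (b := fun _ => x₁)
      (fun n => by simpa only [blockPrefix_const] using hpre n) hu (fun _ => h₁) (fun _ => hx₁)
      fun _ => rfl
  rw [hmax.parityAccept_iff, Nat.not_odd_iff_even]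
  exact heven

lemma parityAccept_of_mem_langB (hq : M.evalFrom M.init x = q) (h₁ : M.evalFrom q x₁ = q)
    (h₂ : M.evalFrom q x₂ = q) (hx₂ : x₂ ≠ []) (hodd : Odd (M.maxColor c q x₂))
    (hlt : M.maxColor c q x₁ < M.maxColor c q x₂) (hw : w ∈ LangB x x₁ x₂) :
    ParityAccept M c w := by
  obtain ⟨j, hpre⟩ := hw
  have hpow : ∀ k, ∀ v ∈ List.replicate k x₁, M.evalFrom q v = q := fun k v hv => by
    rwa [List.eq_of_mem_replicate hv]
  have hloop : ∀ k, M.evalFrom q ((List.replicate k x₁).flatten ++ x₂) = q := fun k => by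
    rw [evalFrom_append, M.evalFrom_flatten_of_loops (hpow k), h₂]
  have hmax : ∀ k, M.maxColor c q ((List.replicate k x₁).flatten ++ x₂) = M.maxColor c q x₂ :=
    fun k => by
      have hle := maxColor_flatten_le c (hpow k) fun v hv => by rw [List.eq_of_mem_replicate hv]
      rw [maxColor_append, M.evalFrom_flatten_of_loops (hpow k), max_eq_right (hle.trans hlt.le)]
  exact (isMaxInfColor_of_blocks hpre hq (fun n => hloop (j n)) (fun _ => by simp [hx₂])
    fun n => hmax (j n)).parityAccept_iff.2 hodd

end languages

def HasOddLoop (M : DetAuto α) (c : M.Q → ℕ) (p : M.Q) : Prop :=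
  ∃ v ≠ [], M.evalFrom p v = p ∧ Odd (M.maxColor c p v)

def HasEvenOddLoops (M : DetAuto α) (c : M.Q → ℕ) : Prop :=
  ∃ (u : List α) (q : M.Q) (v₁ v₂ : List α), M.evalFrom M.init u = q ∧ v₁ ≠ [] ∧ v₂ ≠ [] ∧
    M.evalFrom q v₁ = q ∧ M.evalFrom q v₂ = q ∧ Even (M.maxColor c q v₁) ∧
    Odd (M.maxColor c q v₂) ∧ M.maxColor c q v₁ < M.maxColor c q v₂

lemma exists_loop_maxColor_eq {N n₁ n₂ n₃ : ℕ} (hle : ∀ k ≥ N, c (M.run w k) ≤ m)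
    (hN : N ≤ n₁) (h₁₂ : n₁ ≤ n₂) (h₂₃ : n₂ < n₃) (hrec : M.run w n₃ = M.run w n₁)
    (hm : c (M.run w n₂) = m) :
    ∃ v ≠ [], M.evalFrom (M.run w n₁) v = M.run w n₁ ∧ M.maxColor c (M.run w n₁) v = m := by
  obtain ⟨d, rfl⟩ : ∃ d, n₃ = n₁ + (d + 1) := ⟨n₃ - n₁ - 1, by omega⟩
  refine ⟨wordSegment w n₁ (d + 1), List.cons_ne_nil _ _, by rw [evalFrom_wordSegment, hrec],
    le_antisymm (maxColor_wordSegment_le c w fun i _ => hle _ (by omega)) ?_⟩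
  have := le_maxColor_wordSegment c w (a := n₁) (i := n₂ - n₁) (k := d + 1) (by omega)
  rwa [Nat.add_sub_cancel' h₁₂, hm] at this

lemma IsMaxInfColor.eventually_hasOddLoop (h : M.IsMaxInfColor c w m) (hm : Odd m) :
    ∀ᶠ n in atTop, M.HasOddLoop c (M.run w n) := by
  obtain ⟨N, hN⟩ := eventually_atTop.1 h.2
  filter_upwards [eventually_frequently_eq_self (M.run w), eventually_ge_atTop N]
    with n hrec hn
  obtain ⟨n₂, hn₂, hm₂⟩ := frequently_atTop.1 h.1 n
  obtain ⟨n₃, hn₃, hrec₃⟩ := frequently_atTop.1 hrec (n₂ + 1)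
  obtain ⟨v, hv, hloop, hmax⟩ := exists_loop_maxColor_eq hN hn hn₂ hn₃ hrec₃ hm₂
  exact ⟨v, hv, hloop, hmax ▸ hm⟩

lemma IsMaxInfColor.frequently_not_hasOddLoop (hp : ¬ M.HasEvenOddLoops c)
    (h : M.IsMaxInfColor c w m) (hm : Even m) :
    ∃ᶠ n in atTop, ¬ M.HasOddLoop c (M.run w n) := by
  obtain ⟨N, hN⟩ := eventually_atTop.1 h.2
  refine (h.1.and_eventually ((eventually_frequently_eq_self (M.run w)).and
    (eventually_ge_atTop N))).mono ?_
  rintro n ⟨hm₁, hrec, hn⟩ ⟨v₂, hv₂, hloop₂, hodd⟩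
  obtain ⟨n₃, hn₃, hrec₃⟩ := frequently_atTop.1 hrec (n + 1)
  obtain ⟨v₁, hv₁, hloop₁, hmax₁⟩ := exists_loop_maxColor_eq hN hn le_rfl hn₃ hrec₃ hm₁
  have hlt : m < M.maxColor c (M.run w n) v₂ :=
    (hm₁ ▸ color_le_maxColor c hv₂).lt_of_ne fun heq => Nat.not_even_iff_odd.2 hodd (heq ▸ hm)
  have hreach : M.evalFrom M.init (wordSegment w 0 n) = M.run w n :=
    (M.evalFrom_wordSegment w 0 n).trans (by rw [Nat.zero_add])
  exact hp ⟨wordSegment w 0 n, _, v₁, v₂, hreach, hv₁, hv₂, hloop₁, hloop₂, hmax₁ ▸ hm, hodd,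
    hmax₁ ▸ hlt⟩

end DetAuto

section

variable {L : Set (ℕ → α)} {M : DetAuto α} {c : M.Q → ℕ}

open DetAuto

lemma dcwRecognizable_of_not_hasEvenOddLoops (hL : ∀ w, w ∈ L ↔ ParityAccept M c w)
    (hp : ¬ M.HasEvenOddLoops c) : DCWRecognizable L := by
  refine ⟨M, {p | ¬ M.HasOddLoop c p}, fun w => ?_⟩
  obtain ⟨m, hm⟩ := M.exists_isMaxInfColor c w
  rw [hL, hm.parityAccept_iff]
  rcases Nat.even_or_odd m with heven | hodd
  · exact iff_of_false (Nat.not_odd_iff_even.2 heven)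
      (not_not.2 (hm.frequently_not_hasOddLoop hp heven))
  · exact iff_of_true hodd (by simpa using hm.eventually_hasOddLoop hodd)

lemma exists_langA_langB_of_hasEvenOddLoops (hL : ∀ w, w ∈ L ↔ ParityAccept M c w)
    (hp : M.HasEvenOddLoops c) :
    ∃ x x₁ x₂ : List α, x₁ ≠ [] ∧ x₂ ≠ [] ∧ LangA x x₁ x₂ ∩ L = ∅ ∧ LangB x x₁ x₂ ⊆ L := by
  obtain ⟨x, q, x₁, x₂, hq, hx₁, hx₂, h₁, h₂, heven, hodd, hlt⟩ := hp
  refine ⟨x, x₁, x₂, hx₁, hx₂, Set.eq_empty_iff_forall_notMem.2 fun w ⟨hA, hw⟩ => ?_,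
    fun w hw => (hL w).2 (parityAccept_of_mem_langB hq h₁ h₂ hx₂ hodd hlt hw)⟩
  exact not_parityAccept_of_mem_langA hq h₁ h₂ hx₁ heven hA ((hL w).1 hw)

end

section

variable {L : Set (ℕ → α)} {A : DetAuto α} {F : Set A.Q} {x x₁ x₂ : List α}

lemma exists_visit_after_of_langA_inter_eq_empty
    (hL : ∀ w, w ∈ L ↔ ¬ ∃ᶠ n in atTop, A.run w n ∈ F) (hA : LangA x x₁ x₂ ∩ L = ∅)
    (hx₁ : x₁ ≠ []) {ws : List (List α)} (hws : ∀ u ∈ ws, u = x₁ ∨ u = x₂) :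
    ∃ k p, (x ++ ws.flatten).length < p ∧
      p ≤ (x ++ ws.flatten ++ (List.replicate k x₁).flatten).length ∧
      A.evalFrom A.init ((x ++ ws.flatten ++ (List.replicate k x₁).flatten).take p) ∈ F := by
  obtain ⟨w, hw⟩ := exists_hasPrefixWord_blockPrefix (u := x ++ ws.flatten) (fun _ => hx₁)
  simp only [blockPrefix_const] at hw
  have hwL : w ∉ L := fun h => (Set.eq_empty_iff_forall_notMem.1 hA w) ⟨⟨ws, hws, hw⟩, h⟩
  rw [hL, not_not] at hwL
  obtain ⟨p, hp, hpF⟩ := frequently_atTop.1 hwL ((x ++ ws.flatten).length + 1)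
  have hlen : p ≤ (x ++ ws.flatten ++ (List.replicate p x₁).flatten).length := by
    have := Nat.le_mul_of_pos_right p (List.length_pos_iff.2 hx₁)
    simp only [List.length_append, List.length_flatten, List.map_replicate, List.sum_replicate,
      smul_eq_mul]
    omega
  exact ⟨p, p, hp, hlen, A.run_eq_evalFrom_take (hw p) hlen ▸ hpF⟩

lemma not_dcwRecognizable_of_langA_langB (hx₁ : x₁ ≠ []) (hA : LangA x x₁ x₂ ∩ L = ∅)
    (hB : LangB x x₁ x₂ ⊆ L) : ¬ DCWRecognizable L := by
  rintro ⟨A, F, hL⟩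
  choose! k p hp hpk hpF using
    fun ws => exists_visit_after_of_langA_inter_eq_empty hL hA hx₁ (ws := ws)
  let ws : ℕ → List (List α) := fun n =>
    Nat.rec [] (fun _ ws => ws ++ (List.replicate (k ws) x₁ ++ [x₂])) n
  have hws : ∀ n, ∀ u ∈ ws n, u = x₁ ∨ u = x₂ := by
    intro n
    induction n with
    | zero => simp [ws]
    | succ n ih =>
      simp only [ws, List.mem_append, List.mem_singleton]
      rintro u (hu | hu | rfl)
      exacts [ih u hu, .inl (List.eq_of_mem_replicate hu), .inr rfl]
  let b : ℕ → List α := fun i => (List.replicate (k (ws i)) x₁).flatten ++ x₂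
  have hpre : ∀ n, blockPrefix x b n = x ++ (ws n).flatten := by
    intro n
    induction n with
    | zero => simp [ws]
    | succ n ih => simp [blockPrefix_succ, ih, b, ws]
  have hb : ∀ n, b n ≠ [] := fun n => by
    have := (hp (ws n) (hws n)).trans_le (hpk (ws n) (hws n))
    simp only [List.length_append] at this
    simp only [b, ne_eq, List.append_eq_nil_iff, not_and_or]
    exact .inl (List.ne_nil_of_length_pos (by omega))
  obtain ⟨w, hw⟩ := exists_hasPrefixWord_blockPrefix hb
  refine (hL w).1 (hB ⟨fun i => k (ws i), hw⟩) (frequently_atTop.2 fun N => ⟨p (ws N), ?_, ?_⟩)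
  · have := le_length_blockPrefix (u := x) hb N
    rw [hpre] at this
    exact (this.trans_lt (hp (ws N) (hws N))).le
  · have hN := hpk (ws N) (hws N)
    have hlen : p (ws N) ≤ (blockPrefix x b (N + 1)).length := by
      simp only [blockPrefix_succ, hpre, b, List.length_append] at hN ⊢
      omega
    rw [A.run_eq_evalFrom_take (hw (N + 1)) hlen,
      blockPrefix_succ, hpre, ← List.append_assoc, List.take_append_of_le_length hN]
    exact hpF (ws N) (hws N)

end

theorem stmt_14_general {Sig : Type} (L : Set (ℕ → Sig)) (hL : OmegaRegular L) :
    ¬ DCWRecognizable L ↔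
      ∃ x x₁ x₂ : List Sig, x₁ ≠ [] ∧ x₂ ≠ [] ∧
        LangA x x₁ x₂ ∩ L = ∅ ∧ LangB x x₁ x₂ ⊆ L := by
  obtain ⟨M, c, hM⟩ := hL
  constructor
  · intro hndcw
    by_cases hp : M.HasEvenOddLoops c
    · exact exists_langA_langB_of_hasEvenOddLoops hM hp
    · exact absurd (dcwRecognizable_of_not_hasEvenOddLoops hM hp) hndcw
  · rintro ⟨x, x₁, x₂, hx₁, -, hA, hB⟩
    exact not_dcwRecognizable_of_langA_langB hx₁ hA hB

/-- An ω-regular language `L` is not DCW-recognizable iff there are finite words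
`x ∈ Σ*`, `x₁, x₂ ∈ Σ⁺` with `x·(x₁+x₂)*·x₁^ω ∩ L = ∅` and `x·(x₁*·x₂)^ω ⊆ L`. -/
theorem stmt_14 {Sig : Type} [Fintype Sig] (L : Set (ℕ → Sig)) (hL : OmegaRegular L) :
    ¬ DCWRecognizable L ↔
      ∃ x x₁ x₂ : List Sig, x₁ ≠ [] ∧ x₂ ≠ [] ∧
        LangA x x₁ x₂ ∩ L = ∅ ∧ LangB x x₁ x₂ ⊆ L :=
  stmt_14_general L hL
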